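/- arXiv:cs/0508097 — 2 statements merged into one kernel-verified Lean document; each statement's English description precedes it below -/
import Mathlib

section
/- Let G be a graph, let I be an independent set in G, and let I* be any other set of vertices such that no edge of G joins two vertices of I* (i.e., I* is also independent). Construct the 'flip set' I' = I \ (S ∩ I) ∪ (S ∩ I*), where S is any vertex set satisfying: for every j ∈ S ∩ I, all neighbors of j lying in I* belong to S ∩ I*, and for every j ∈ S ∩ I*, all neighbors of j lying in I belong to S ∩ I, and S ∩ I and S ∩ I* are disjoint. Then I' is an independent set in G. -/
/-- A set `S` of vertices is independent in `G`. -/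
def IsIndepSet {V : Type*} (G : SimpleGraph V) (S : Set V) : Prop :=
  ∀ i ∈ S, ∀ j ∈ S, ¬ G.Adj i j

/-- **Flipping an alternating set preserves independence.**
If `I` and `Istar` are independent sets, `S ∩ I` and `S ∩ Istar` are disjoint,
and `S` is closed under taking neighbors alternately (every neighbor in `Istar`
of a vertex of `S ∩ I` lies in `S ∩ Istar`, and every neighbor in `I` of a vertex
of `S ∩ Istar` lies in `S ∩ I`), then the flip `I' = (I \ (S ∩ I)) ∪ (S ∩ Istar)`
is an independent set. -/
theorem flip_alternating_set_indep
    {V : Type*} (G : SimpleGraph V) (I Istar S : Set V)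
    (hI : IsIndepSet G I) (hIstar : IsIndepSet G Istar)
    (hdisj : Disjoint (S ∩ I) (S ∩ Istar))
    (hclose1 : ∀ j ∈ S ∩ I, ∀ k, G.Adj j k → k ∈ Istar → k ∈ S ∩ Istar)
    (hclose2 : ∀ j ∈ S ∩ Istar, ∀ k, G.Adj j k → k ∈ I → k ∈ S ∩ I) :
    IsIndepSet G ((I \ (S ∩ I)) ∪ (S ∩ Istar)) := by
  rintro i (⟨hiI, hiS⟩ | hiS) j (⟨hjI, hjS⟩ | hjS) hadj
  · exact hI i hiI j hjI hadj
  · exact hiS (hclose2 j hjS i hadj.symm hiI)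
  · exact hjS (hclose2 i hiS j hadj hjI)
  · exact hIstar i hiS.2 j hjS.2 hadj
end

section
/- Define the bonus at the root of a tree as B = W_root - ∑_{j ∈ children(root)} γ_{j→root}. Under the max-product recursion on a rooted tree of odd depth t with leaf boundary conditions 0 ≤ L ≤ W, the bonuses satisfy B(0) ≤ B(L) ≤ B(W), where B(0), B(L), B(W) are the bonuses under boundary conditions all-zero, L, and all-weights respectively. -/
/-- A rooted computation tree: a leaf carries a weight `w` and a boundary value `L`;
an internal node carries a weight `w` and a list of child subtrees. -/
inductive MPTree where
  | leaf (w : ℝ) (L : ℝ) : MPTree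
  | node (w : ℝ) (children : List MPTree) : MPTree

/-- The max-product message sent by the root of a tree to its parent. -/
def MPTree.msg : MPTree → ℝ
  | .leaf w L => max 0 (w - L)
  | .node w cs => max 0 (w - (cs.attach.map fun c => c.1.msg).sum)
decreasing_by
  have := List.sizeOf_lt_of_mem c.2
  simp only [MPTree.node.sizeOf_spec]
  omega

/-- `BLE T T'`: same shape and weights, with leaf boundary conditions
`L, L'` satisfying `0 ≤ L ≤ L' ≤ w` componentwise. -/
inductive MPTree.BLE : MPTree → MPTree → Prop
  | leaf {w L L' : ℝ} : 0 ≤ L → L ≤ L' → L' ≤ w → MPTree.BLE (.leaf w L) (.leaf w L')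
  | node {w : ℝ} {cs cs' : List MPTree} : List.Forall₂ MPTree.BLE cs cs' →
      MPTree.BLE (.node w cs) (.node w cs')

/-- All (boundary-carrying) leaves of the tree are at depth exactly `t`. -/
inductive MPTree.UniformDepth : ℕ → MPTree → Prop
  | leaf {w L : ℝ} : MPTree.UniformDepth 0 (.leaf w L)
  | node {t : ℕ} {w : ℝ} {cs : List MPTree} : (∀ c ∈ cs, MPTree.UniformDepth t c) →
      MPTree.UniformDepth (t + 1) (.node w cs)

/-- All leaf boundary values are `0`. -/
inductive MPTree.BndZero : MPTree → Prop
  | leaf {w : ℝ} : MPTree.BndZero (.leaf w 0)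
  | node {w : ℝ} {cs : List MPTree} : (∀ c ∈ cs, MPTree.BndZero c) →
      MPTree.BndZero (.node w cs)

/-- All leaf boundary values equal the leaf weights. -/
inductive MPTree.BndFull : MPTree → Prop
  | leaf {w : ℝ} : MPTree.BndFull (.leaf w w)
  | node {w : ℝ} {cs : List MPTree} : (∀ c ∈ cs, MPTree.BndFull c) →
      MPTree.BndFull (.node w cs)

/-- The bonus at the root: root weight minus the sum of the children's messages. -/
def MPTree.rootBonus (w : ℝ) (cs : List MPTree) : ℝ :=
  w - (cs.map MPTree.msg).sum

/-! Raising the leaf boundaries lowers the leaf messages, and each level of the recursion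
`max 0 (w - ∑ children)` reverses the direction of change. So the message of a subtree whose
leaves all lie at even distance below it is antitone in the boundary condition, at odd distance
monotone. For odd `t` the root's children are at even distance from the leaves: their messages
drop, and the root bonus rises. -/

namespace MPTree

theorem msg_node (w : ℝ) (cs : List MPTree) : msg (.node w cs) = max 0 (rootBonus w cs) := by
  rw [msg, rootBonus, List.map_attach_eq_pmap, List.pmap_eq_map]

theorem rootBonus_le_rootBonus_of_forall₂ {w : ℝ} {cs cs' : List MPTree}
    (h : List.Forall₂ (fun c c' => msg c' ≤ msg c) cs cs') :
    rootBonus w cs ≤ rootBonus w cs' := by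
  refine sub_le_sub_left (List.Forall₂.sum_le_sum ?_) w
  rw [List.forall₂_map_left_iff, List.forall₂_map_right_iff]
  exact h.flip

theorem msg_antitone_or_monotone_of_BLE {d : ℕ} {T T' : MPTree} (hd : UniformDepth d T)
    (hb : BLE T T') : (Even d → msg T' ≤ msg T) ∧ (Odd d → msg T ≤ msg T') := by
  induction hd generalizing T' with
  | leaf =>
    obtain ⟨-, hLL', -⟩ := hb
    refine ⟨fun _ => ?_, fun h => absurd h Nat.not_odd_zero⟩
    simp only [msg]
    exact max_le_max le_rfl (sub_le_sub_left hLL' _)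
  | @node n w cs _ ih =>
    obtain _ | ⟨hf⟩ := hb
    have hchildren := (List.forall₂_and_left _ _).2 ⟨ih, hf⟩
    rw [msg_node, msg_node]
    refine ⟨fun he => max_le_max le_rfl ?_, fun ho => max_le_max le_rfl ?_⟩
    · have hn : Odd n := Nat.not_even_iff_odd.1 (Nat.even_add_one.1 he)
      exact rootBonus_le_rootBonus_of_forall₂ (hchildren.imp fun _ _ h => (h.1 h.2).2 hn).flip
    · have hn : Even n := Nat.not_odd_iff_even.1 (Nat.odd_add_one.1 ho)
      exact rootBonus_le_rootBonus_of_forall₂ (hchildren.imp fun _ _ h => (h.1 h.2).1 hn)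

theorem UniformDepth.of_BLE {d : ℕ} {T T' : MPTree} (hd : UniformDepth d T) (hb : BLE T T') :
    UniformDepth d T' := by
  induction hd generalizing T' with
  | leaf => obtain ⟨-, -, -⟩ := hb; exact .leaf
  | @node n w cs _ ih =>
    obtain _ | ⟨hf⟩ := hb
    have hchildren : List.Forall₂ (fun c' _ => UniformDepth n c' ∧ True) _ cs :=
      List.Forall₂.flip
        (((List.forall₂_and_left _ _).2 ⟨ih, hf⟩).imp fun _ _ h => ⟨h.1 h.2, trivial⟩)
    exact .node ((List.forall₂_and_left _ _).1 hchildren).1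

theorem rootBonus_le_rootBonus_of_BLE {t : ℕ} (ht : Odd t) {w : ℝ} {cs cs' : List MPTree}
    (hd : UniformDepth t (.node w cs)) (hb : BLE (.node w cs) (.node w cs')) :
    rootBonus w cs ≤ rootBonus w cs' := by
  obtain _ | @⟨n, _, _, hcs⟩ := hd
  obtain _ | ⟨hf⟩ := hb
  have hn : Even n := Nat.not_odd_iff_even.1 (Nat.odd_add_one.1 ht)
  refine rootBonus_le_rootBonus_of_forall₂ (((List.forall₂_and_left _ _).2 ⟨hcs, hf⟩).imp ?_)
  exact fun _ _ h => (msg_antitone_or_monotone_of_BLE h.1 h.2).1 hn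

end MPTree

theorem mp_root_bonus_monotone_general
    (t : ℕ) (ht : Odd t) (w : ℝ) (cs0 csL csW : List MPTree)
    (hdepth : MPTree.UniformDepth t (.node w cs0))
    (h0L : MPTree.BLE (.node w cs0) (.node w csL))
    (hLW : MPTree.BLE (.node w csL) (.node w csW)) :
    MPTree.rootBonus w cs0 ≤ MPTree.rootBonus w csL ∧
    MPTree.rootBonus w csL ≤ MPTree.rootBonus w csW :=
  ⟨MPTree.rootBonus_le_rootBonus_of_BLE ht hdepth h0L,
    MPTree.rootBonus_le_rootBonus_of_BLE ht (hdepth.of_BLE h0L) hLW⟩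

/-- **Monotonicity of the root bonus in the boundary condition (odd depth).**
For a rooted tree of odd depth `t` and leaf boundary conditions `0 ≤ L ≤ W`,
the root bonuses satisfy `B(0) ≤ B(L) ≤ B(W)`. -/
theorem mp_root_bonus_monotone
    (t : ℕ) (ht : Odd t) (w : ℝ) (cs0 csL csW : List MPTree)
    (hdepth : MPTree.UniformDepth t (.node w cs0))
    (h0 : MPTree.BndZero (.node w cs0)) (hW : MPTree.BndFull (.node w csW))
    (h0L : MPTree.BLE (.node w cs0) (.node w csL))
    (hLW : MPTree.BLE (.node w csL) (.node w csW)) :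
    MPTree.rootBonus w cs0 ≤ MPTree.rootBonus w csL ∧
    MPTree.rootBonus w csL ≤ MPTree.rootBonus w csW :=
  mp_root_bonus_monotone_general t ht w cs0 csL csW hdepth h0L hLW
end
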